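/- Let H be a finite-dimensional complex inner product space, let P̄_0,…,P̄_n be a CSOP on H, let U_0,…,U_t be unitary operators on H, let Ψ ∈ H with ‖Ψ‖ = 1, and let Q be an orthogonal projection on H. Define π : {0,1}^n → ℝ by π(x) = ‖ Q · Σ_{k ∈ {0,…,n}^{t+1}} (−1)^{s_x(k)} Ψ(k) ‖², where s_x(k) = Σ_{i=0}^t x_{k_i} and x_0 := 0. Assume some Ψ(k) is nonzero and let μ = min{ ‖Ψ(k)‖² : k ∈ {0,…,n}^{t+1}, Ψ(k) ≠ 0 }. Then the Fourier 1-norm of π satisfies L(π) ≤ 1/μ. -/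

import Mathlib

noncomputable section

/-- `Utilde U j = U j ∘ U (j-1) ∘ ⋯ ∘ U 0`. -/
def Utilde {H : Type*} [NormedAddCommGroup H] [InnerProductSpace ℂ H]
    (U : ℕ → H →L[ℂ] H) : ℕ → H →L[ℂ] H
  | 0 => U 0
  | j + 1 => U (j + 1) ∘L Utilde U j

/-- `Ptilde U P i j = (Utilde U j)† ∘ P i ∘ Utilde U j`. -/
def Ptilde {H : Type*} [NormedAddCommGroup H] [InnerProductSpace ℂ H]
    [FiniteDimensional ℂ H] (U P : ℕ → H →L[ℂ] H) (i j : ℕ) : H →L[ℂ] H :=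
  ContinuousLinearMap.adjoint (Utilde U j) ∘L (P i ∘L Utilde U j)

/-- `PsiVec U P Ψ k t = Ψ(k) = P̃_{k t}^t ⋯ P̃_{k 1}^1 P̃_{k 0}^0 Ψ`. -/
def PsiVec {H : Type*} [NormedAddCommGroup H] [InnerProductSpace ℂ H]
    [FiniteDimensional ℂ H] (U P : ℕ → H →L[ℂ] H) (Ψ : H) (k : ℕ → ℕ) : ℕ → H
  | 0 => Ptilde U P (k 0) 0 Ψ
  | j + 1 => Ptilde U P (k (j + 1)) (j + 1) (PsiVec U P Ψ k j)

/-- Extension of `x ∈ {0,1}^n` (bits `x_1, …, x_n`) to indices `0, …, n` with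
the convention `x_0 := 0`. -/
def extend0 {n : ℕ} (x : Fin n → Bool) : ℕ → Bool :=
  fun m => if h : 1 ≤ m ∧ m ≤ n then x ⟨m - 1, by omega⟩ else false

/-- `sx x k = Σ_{i=0}^t x_{k_i}` (with `x_0 := 0`). -/
def sx {n t : ℕ} (x : Fin n → Bool) (k : Fin (t + 1) → Fin (n + 1)) : ℕ :=
  ∑ i, if extend0 x (k i) then 1 else 0


/-- The character `χ_b(x) = (−1)^{b·x}` on the Boolean cube, where
`b·x = Σ_i b_i x_i`. -/
def chi {n : ℕ} (b x : Fin n → Bool) : ℝ :=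
  (-1 : ℝ) ^ (∑ i, if b i && x i then 1 else 0 : ℕ)

/-- The Fourier coefficient `α_b = 2^{−n} Σ_x f(x) χ_b(x)` of `f : {0,1}^n → ℝ`. -/
def boolFourierCoeff {n : ℕ} (f : (Fin n → Bool) → ℝ) (b : Fin n → Bool) : ℝ :=
  (2 ^ n : ℝ)⁻¹ * ∑ x, f x * chi b x

/-- The Fourier 1-norm `L(f) = Σ_b |α_b|`. -/
def fourierL1 {n : ℕ} (f : (Fin n → Bool) → ℝ) : ℝ :=
  ∑ b, |boolFourierCoeff f b|

open Fin.NatCast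

/-!
The vectors `Ψ(k)` arise from `Ψ` by applying, one step at a time, the complete families of
orthogonal projections `P̃_i^j = Ũ_j^* P̄_i Ũ_j`, so `Σ_k ‖Ψ(k)‖² = ‖Ψ‖² = 1`.
Each sign `(−1)^{s_x(k)}` is a character `χ_{b(k)}(x)`, where `b(k)_j` is the parity of the number
of occurrences of `j` in `k`. Expanding the square therefore writes
`π = Σ_{k,l} Re⟨QΨ(k), QΨ(l)⟩ χ_{b(k) ⊕ b(l)}`, and the triangle inequality for `L` gives
`L(π) ≤ (Σ_k ‖QΨ(k)‖)² ≤ (Σ_k ‖Ψ(k)‖)²`. Finally `μ ≤ ‖Ψ(k)‖ ‖Ψ(l)‖` whenever both vectors are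
nonzero, so `μ (Σ_k ‖Ψ(k)‖)² ≤ (Σ_k ‖Ψ(k)‖²)² = 1`.
-/

open Finset ContinuousLinearMap

section Fourier

variable {n : ℕ}

theorem chi_eq_prod (b x : Fin n → Bool) :
    chi b x = ∏ i, if b i && x i then -1 else 1 := by
  rw [chi, ← prod_pow_eq_pow_sum]
  exact prod_congr rfl fun i _ => by split_ifs <;> simp

theorem chi_mul_chi (b c x : Fin n → Bool) :
    chi b x * chi c x = chi (fun i => xor (b i) (c i)) x := by
  simp only [chi_eq_prod, ← prod_mul_distrib]
  exact prod_congr rfl fun i _ => by cases b i <;> cases c i <;> cases x i <;> norm_num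

theorem sum_chi_mul_chi (b c : Fin n → Bool) :
    ∑ x, chi b x * chi c x = if b = c then 2 ^ n else 0 := by
  simp only [chi_eq_prod, ← prod_mul_distrib]
  rw [← Fintype.prod_sum fun i y =>
    (if b i && y then (-1 : ℝ) else 1) * if c i && y then -1 else 1]
  have h : ∀ i, ∑ y : Bool, (if b i && y then (-1 : ℝ) else 1) * (if c i && y then -1 else 1)
      = if b i = c i then 2 else 0 := fun i => by
    cases b i <;> cases c i <;> norm_num
  simp only [h, prod_ite_zero, prod_const, card_univ, Fintype.card_fin, mem_univ, true_imp_iff,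
    funext_iff]

theorem boolFourierCoeff_chi (c b : Fin n → Bool) :
    boolFourierCoeff (chi c) b = if c = b then 1 else 0 := by
  rw [boolFourierCoeff, sum_chi_mul_chi]
  split_ifs <;> simp

theorem fourierL1_chi (c : Fin n → Bool) : fourierL1 (chi c) = 1 := by
  simp [fourierL1, boolFourierCoeff_chi, apply_ite]

theorem boolFourierCoeff_sum {ι : Type*} (s : Finset ι) (f : ι → (Fin n → Bool) → ℝ)
    (b : Fin n → Bool) :
    boolFourierCoeff (fun x => ∑ p ∈ s, f p x) b = ∑ p ∈ s, boolFourierCoeff (f p) b := by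
  simp only [boolFourierCoeff, sum_mul, mul_sum]
  exact sum_comm

theorem boolFourierCoeff_const_mul (a : ℝ) (f : (Fin n → Bool) → ℝ) (b : Fin n → Bool) :
    boolFourierCoeff (fun x => a * f x) b = a * boolFourierCoeff f b := by
  simp only [boolFourierCoeff, mul_assoc, ← mul_sum]
  ring

theorem fourierL1_sum_le {ι : Type*} (s : Finset ι) (f : ι → (Fin n → Bool) → ℝ) :
    fourierL1 (fun x => ∑ p ∈ s, f p x) ≤ ∑ p ∈ s, fourierL1 (f p) := by
  simp only [fourierL1, boolFourierCoeff_sum]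
  rw [sum_comm]
  exact sum_le_sum fun b _ => abs_sum_le_sum_abs _ _

theorem fourierL1_const_mul (a : ℝ) (f : (Fin n → Bool) → ℝ) :
    fourierL1 (fun x => a * f x) = |a| * fourierL1 f := by
  simp only [fourierL1, boolFourierCoeff_const_mul, abs_mul, mul_sum]

theorem fourierL1_norm_sq_sum_chi_smul_le {𝕜 E ι : Type*} [RCLike 𝕜]
    [NormedAddCommGroup E] [InnerProductSpace 𝕜 E] [Fintype ι] (β : ι → Fin n → Bool)
    (v : ι → E) :
    fourierL1 (fun x => ‖∑ i, (chi (β i) x : 𝕜) • v i‖ ^ 2) ≤ (∑ i, ‖v i‖) ^ 2 := by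
  have expand : ∀ x, ‖∑ i, (chi (β i) x : 𝕜) • v i‖ ^ 2 = ∑ p : ι × ι,
      RCLike.re (inner 𝕜 (v p.1) (v p.2)) * chi (fun m => xor (β p.1 m) (β p.2 m)) x := by
    intro x
    rw [@norm_sq_eq_re_inner 𝕜, sum_inner, map_sum, Fintype.sum_prod_type]
    refine sum_congr rfl fun i _ => ?_
    rw [inner_sum, map_sum]
    refine sum_congr rfl fun j _ => ?_
    rw [inner_smul_left, inner_smul_right, RCLike.conj_ofReal, ← mul_assoc, ← RCLike.ofReal_mul,
      RCLike.re_ofReal_mul, chi_mul_chi, mul_comm]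
  calc fourierL1 (fun x => ‖∑ i, (chi (β i) x : 𝕜) • v i‖ ^ 2)
      = fourierL1 (fun x => ∑ p : ι × ι,
          RCLike.re (inner 𝕜 (v p.1) (v p.2)) * chi (fun m => xor (β p.1 m) (β p.2 m)) x) := by
        simp only [expand]
    _ ≤ ∑ p : ι × ι, fourierL1 (fun x =>
          RCLike.re (inner 𝕜 (v p.1) (v p.2)) * chi (fun m => xor (β p.1 m) (β p.2 m)) x) :=
        fourierL1_sum_le _ _
    _ = ∑ p : ι × ι, |RCLike.re (inner 𝕜 (v p.1) (v p.2))| := by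
        simp only [fourierL1_const_mul, fourierL1_chi, mul_one]
    _ ≤ ∑ p : ι × ι, ‖v p.1‖ * ‖v p.2‖ := sum_le_sum fun p _ =>
        (RCLike.abs_re_le_norm _).trans (norm_inner_le_norm _ _)
    _ = (∑ i, ‖v i‖) ^ 2 := by rw [sq, sum_mul_sum, Fintype.sum_prod_type]

end Fourier

section Signs

variable {n t : ℕ}

theorem extend0_zero (x : Fin n → Bool) : extend0 x 0 = false := by
  simp [extend0]

theorem extend0_succ (x : Fin n → Bool) (j : Fin n) : extend0 x (j + 1) = x j := by
  simp [extend0, Nat.succ_le_of_lt j.isLt]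

def occurrenceParity (k : Fin (t + 1) → Fin (n + 1)) (j : Fin n) : Bool :=
  decide (Odd #{i | k i = j.succ})

theorem neg_one_pow_sx (x : Fin n → Bool) (k : Fin (t + 1) → Fin (n + 1)) :
    (-1 : ℝ) ^ sx x k = chi (occurrenceParity k) x := by
  rw [sx, ← prod_pow_eq_pow_sum,
    ← prod_fiberwise' univ k fun m : Fin (n + 1) => (-1 : ℝ) ^ (if extend0 x m then 1 else 0),
    Fin.prod_univ_succ, chi_eq_prod]
  simp only [prod_const, Fin.val_zero, extend0_zero, Fin.val_succ, extend0_succ, occurrenceParity,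
    Bool.false_eq_true, if_false, pow_zero, one_pow, one_mul]
  refine prod_congr rfl fun j _ => ?_
  rcases Nat.even_or_odd #{i | k i = j.succ} with h | h <;>
    cases x j <;> simp [h.neg_one_pow, Nat.not_odd_iff_even.mpr, h]

end Signs

section Projections

variable {𝕜 E ι : Type*} [RCLike 𝕜] [NormedAddCommGroup E] [InnerProductSpace 𝕜 E]
  [CompleteSpace E]

theorem norm_sq_apply_eq_re_inner_of_isStarProjection {p : E →L[𝕜] E} (hp : IsStarProjection p)
    (v : E) : ‖p v‖ ^ 2 = RCLike.re (inner 𝕜 v (p v)) := by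
  rw [@norm_sq_eq_re_inner 𝕜, ← adjoint_inner_right, hp.isSelfAdjoint.adjoint_eq,
    ← mul_apply_eq_comp, hp.isIdempotentElem.eq]

theorem sum_norm_sq_apply_of_sum_eq_one {p : ι → E →L[𝕜] E} {s : Finset ι}
    (hp : ∀ i ∈ s, IsStarProjection (p i)) (hsum : ∑ i ∈ s, p i = 1) (v : E) :
    ∑ i ∈ s, ‖p i v‖ ^ 2 = ‖v‖ ^ 2 := by
  rw [sum_congr rfl fun i hi => norm_sq_apply_eq_re_inner_of_isStarProjection (hp i hi) v,
    ← map_sum, ← inner_sum, ← _root_.sum_apply, hsum, one_apply_eq_self, @norm_sq_eq_re_inner 𝕜]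

theorem norm_apply_le_of_isStarProjection {p : E →L[𝕜] E} (hp : IsStarProjection p) (v : E) :
    ‖p v‖ ≤ ‖v‖ :=
  (p.le_of_opNorm_le (IsStarProjection.norm_le p hp) v).trans_eq (one_mul _)

end Projections

section QueryAlgorithm

variable {H : Type*} [NormedAddCommGroup H] [InnerProductSpace ℂ H] [FiniteDimensional ℂ H]
  {U P : ℕ → H →L[ℂ] H} {n t : ℕ}

theorem utilde_mem_unitary (hU : ∀ j ≤ t, U j ∈ unitary (H →L[ℂ] H)) :
    ∀ j ≤ t, Utilde U j ∈ unitary (H →L[ℂ] H)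
  | 0, h => hU 0 h
  | j + 1, h => mul_mem (hU (j + 1) h) (utilde_mem_unitary hU j (by omega))

theorem norm_ptilde_apply {j : ℕ} (hU : Utilde U j ∈ unitary (H →L[ℂ] H)) (i : ℕ) (v : H) :
    ‖Ptilde U P i j v‖ = ‖P i (Utilde U j v)‖ :=
  norm_map_of_mem_unitary (Unitary.star_mem hU) _

theorem sum_norm_sq_ptilde_apply (hP : ∀ i ≤ n, IsStarProjection (P i))
    (hP_sum : ∑ i ∈ range (n + 1), P i = 1) (hU : ∀ j ≤ t, U j ∈ unitary (H →L[ℂ] H))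
    {j : ℕ} (hj : j ≤ t) (v : H) :
    ∑ i ∈ range (n + 1), ‖Ptilde U P i j v‖ ^ 2 = ‖v‖ ^ 2 := by
  simp only [norm_ptilde_apply (utilde_mem_unitary hU j hj)]
  rw [sum_norm_sq_apply_of_sum_eq_one (fun i hi => hP i (by simpa [Nat.lt_succ_iff] using hi))
    hP_sum, norm_map_of_mem_unitary (utilde_mem_unitary hU j hj)]

theorem psiVec_congr (Ψ : H) {k k' : ℕ → ℕ} {j : ℕ} (h : ∀ i ≤ j, k i = k' i) :
    PsiVec U P Ψ k j = PsiVec U P Ψ k' j := by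
  induction j with
  | zero => simp only [PsiVec, h 0 le_rfl]
  | succ j ih => simp only [PsiVec, h (j + 1) le_rfl, ih fun i hi => h i (by omega)]

theorem psiVec_snoc (Ψ : H) {j : ℕ} (k : Fin (j + 1) → Fin (n + 1)) (a : Fin (n + 1)) :
    PsiVec U P Ψ (fun i => (Fin.snoc (α := fun _ => Fin (n + 1)) k a i : ℕ)) (j + 1)
      = Ptilde U P a (j + 1) (PsiVec U P Ψ (fun i => (k i : ℕ)) j) := by
  rw [PsiVec, Fin.natCast_eq_last, Fin.snoc_last]
  congr 1
  refine psiVec_congr Ψ fun i hi => ?_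
  have hcast : (i : Fin (j + 2)) = Fin.castSucc (i : Fin (j + 1)) := by
    ext
    simp [Fin.val_natCast, Nat.mod_eq_of_lt (show i < j + 1 by omega),
      Nat.mod_eq_of_lt (show i < j + 2 by omega)]
  rw [hcast, Fin.snoc_castSucc]

theorem sum_norm_sq_psiVec (hP : ∀ i ≤ n, IsStarProjection (P i))
    (hP_sum : ∑ i ∈ range (n + 1), P i = 1) (hU : ∀ j ≤ t, U j ∈ unitary (H →L[ℂ] H))
    (Ψ : H) : ∀ j ≤ t, ∑ k : Fin (j + 1) → Fin (n + 1),
      ‖PsiVec U P Ψ (fun i => (k i : ℕ)) j‖ ^ 2 = ‖Ψ‖ ^ 2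
  | 0, _ => by
    rw [← (Equiv.funUnique (Fin 1) (Fin (n + 1))).symm.sum_comp,
      ← sum_norm_sq_ptilde_apply hP hP_sum hU (Nat.zero_le t) Ψ, ← Fin.sum_univ_eq_sum_range]
    rfl
  | j + 1, hj => by
    rw [← (Fin.snocEquiv fun _ => Fin (n + 1)).sum_comp, Fintype.sum_prod_type, sum_comm,
      ← sum_norm_sq_psiVec hP hP_sum hU Ψ j (by omega)]
    refine sum_congr rfl fun k _ => ?_
    simp only [Fin.snocEquiv_apply, psiVec_snoc]
    rw [Fin.sum_univ_eq_sum_range (fun i => ‖Ptilde U P i (j + 1) _‖ ^ 2),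
      sum_norm_sq_ptilde_apply hP hP_sum hU hj]

end QueryAlgorithm

theorem mul_sq_sum_le_sq_sum_sq {ι : Type*} (s : Finset ι) {x : ι → ℝ} {μ : ℝ}
    (hx : ∀ i ∈ s, 0 ≤ x i) (hμ : ∀ i ∈ s, x i ≠ 0 → μ ≤ x i ^ 2) :
    μ * (∑ i ∈ s, x i) ^ 2 ≤ (∑ i ∈ s, x i ^ 2) ^ 2 := by
  rw [sq, sq, sum_mul_sum, sum_mul_sum, mul_sum]
  refine sum_le_sum fun i hi => ?_
  rw [mul_sum]
  refine sum_le_sum fun j hj => ?_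
  rcases eq_or_ne (x i) 0 with hi0 | hi0
  · simp [hi0]
  rcases eq_or_ne (x j) 0 with hj0 | hj0
  · simp [hj0]
  have hxij := mul_nonneg (hx i hi) (hx j hj)
  have hμ_le : μ ≤ x i * x j := by
    by_contra! h
    nlinarith [mul_le_mul (hμ i hi hi0) (hμ j hj hj0) (by linarith) (sq_nonneg (x i))]
  nlinarith [mul_le_mul_of_nonneg_right hμ_le hxij]

theorem fourierL1_le_inv_min_sq_norm_general {H : Type*} [NormedAddCommGroup H]
    [InnerProductSpace ℂ H] [FiniteDimensional ℂ H] (n t : ℕ) (P U : ℕ → H →L[ℂ] H)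
    (hP_selfadj : ∀ i ≤ n, IsSelfAdjoint (P i))
    (hP_idem : ∀ i ≤ n, P i ∘L P i = P i)
    (hP_sum : ∑ i ∈ Finset.range (n + 1), P i = 1)
    (hU_unitary : ∀ j ≤ t,
      ContinuousLinearMap.adjoint (U j) ∘L U j = 1 ∧
        U j ∘L ContinuousLinearMap.adjoint (U j) = 1)
    (Ψ : H) (hΨ : ‖Ψ‖ = 1)
    (Q : H →L[ℂ] H) (hQ_selfadj : IsSelfAdjoint Q) (hQ_idem : Q ∘L Q = Q)
    (μ : ℝ)
    (hμ : IsLeast {r : ℝ | ∃ k : Fin (t + 1) → Fin (n + 1),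
        PsiVec U P Ψ (fun i => (k i : ℕ)) t ≠ 0 ∧
        r = ‖PsiVec U P Ψ (fun i => (k i : ℕ)) t‖ ^ 2} μ) :
    fourierL1 (fun x : Fin n → Bool =>
        ‖Q (∑ k : Fin (t + 1) → Fin (n + 1),
            ((-1 : ℂ) ^ sx x k) • PsiVec U P Ψ (fun i => (k i : ℕ)) t)‖ ^ 2) ≤ 1 / μ := by
  obtain ⟨⟨k₀, hk₀, hμ_eq⟩, hμ_le⟩ := hμ
  have hμ_pos : 0 < μ := hμ_eq ▸ pow_pos (norm_pos_iff.mpr hk₀) 2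
  set ψ := fun k : Fin (t + 1) → Fin (n + 1) => PsiVec U P Ψ (fun i => (k i : ℕ)) t
  have hP : ∀ i ≤ n, IsStarProjection (P i) := fun i hi => ⟨hP_idem i hi, hP_selfadj i hi⟩
  have hU : ∀ j ≤ t, U j ∈ unitary (H →L[ℂ] H) := fun j hj =>
    Unitary.mem_iff.mpr (hU_unitary j hj)
  have hQ : IsStarProjection Q := ⟨hQ_idem, hQ_selfadj⟩
  have hψ_sum : ∑ k, ‖ψ k‖ ^ 2 = 1 := by
    simpa [hΨ] using sum_norm_sq_psiVec hP hP_sum hU Ψ t le_rfl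
  have hπ : ∀ x, Q (∑ k, ((-1 : ℂ) ^ sx x k) • ψ k)
      = ∑ k, (RCLike.ofReal (chi (occurrenceParity k) x) : ℂ) • Q (ψ k) := by
    intro x
    simp only [map_sum, map_smul, ← neg_one_pow_sx]
    push_cast
    rfl
  have hψ_norm : μ * (∑ k, ‖ψ k‖) ^ 2 ≤ 1 := by
    simpa [hψ_sum] using mul_sq_sum_le_sq_sum_sq univ (fun k _ => norm_nonneg (ψ k))
      fun k _ hk => hμ_le ⟨k, norm_ne_zero_iff.mp hk, rfl⟩
  calc fourierL1 (fun x => ‖Q (∑ k, ((-1 : ℂ) ^ sx x k) • ψ k)‖ ^ 2)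
      ≤ (∑ k, ‖Q (ψ k)‖) ^ 2 := by
        simpa only [hπ] using fourierL1_norm_sq_sum_chi_smul_le _ fun k => Q (ψ k)
    _ ≤ (∑ k, ‖ψ k‖) ^ 2 := by
        gcongr with k
        exact norm_apply_le_of_isStarProjection hQ _
    _ ≤ 1 / μ := by rwa [le_div_iff₀' hμ_pos]

/-- For a CSOP `P̄_0, …, P̄_n`, unitaries `U_0, …, U_t`, a unit vector
`Ψ ∈ H` and an orthogonal projection `Q`, if some `Ψ(k)` is nonzero and
`μ = min{‖Ψ(k)‖² : Ψ(k) ≠ 0}`, then the output probability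
`π(x) = ‖Q Σ_k (−1)^{s_x(k)} Ψ(k)‖²` satisfies `L(π) ≤ 1/μ`. -/
theorem fourierL1_le_inv_min_sq_norm {H : Type*} [NormedAddCommGroup H]
    [InnerProductSpace ℂ H] [FiniteDimensional ℂ H] (n t : ℕ) (P U : ℕ → H →L[ℂ] H)
    (hP_selfadj : ∀ i ≤ n, IsSelfAdjoint (P i))
    (hP_idem : ∀ i ≤ n, P i ∘L P i = P i)
    (hP_orth : ∀ i ≤ n, ∀ j ≤ n, i ≠ j → P i ∘L P j = 0)
    (hP_sum : ∑ i ∈ Finset.range (n + 1), P i = 1)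
    (hU_unitary : ∀ j ≤ t,
      ContinuousLinearMap.adjoint (U j) ∘L U j = 1 ∧
        U j ∘L ContinuousLinearMap.adjoint (U j) = 1)
    (Ψ : H) (hΨ : ‖Ψ‖ = 1)
    (Q : H →L[ℂ] H) (hQ_selfadj : IsSelfAdjoint Q) (hQ_idem : Q ∘L Q = Q)
    (hex : ∃ k : Fin (t + 1) → Fin (n + 1), PsiVec U P Ψ (fun i => (k i : ℕ)) t ≠ 0)
    (μ : ℝ)
    (hμ : IsLeast {r : ℝ | ∃ k : Fin (t + 1) → Fin (n + 1),
        PsiVec U P Ψ (fun i => (k i : ℕ)) t ≠ 0 ∧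
        r = ‖PsiVec U P Ψ (fun i => (k i : ℕ)) t‖ ^ 2} μ) :
    fourierL1 (fun x : Fin n → Bool =>
        ‖Q (∑ k : Fin (t + 1) → Fin (n + 1),
            ((-1 : ℂ) ^ sx x k) • PsiVec U P Ψ (fun i => (k i : ℕ)) t)‖ ^ 2) ≤ 1 / μ :=
  fourierL1_le_inv_min_sq_norm_general n t P U hP_selfadj hP_idem hP_sum hU_unitary Ψ hΨ Q
    hQ_selfadj hQ_idem μ hμ
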